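/- Let Σ be a symmetric positive definite p×p real matrix partitioned into blocks Σ = [[Σ₁₁, Σ₁₂],[Σ₂₁, Σ₂₂]] with Σ₁₁ of size d₁×d₁ and Σ₂₂ of size d₂×d₂ (d₁ + d₂ = p, Σ₂₁ = Σ₁₂ᵀ). Let x, μ, β ∈ ℝ^p be partitioned conformably as x = (x₁ᵀ, x₂ᵀ)ᵀ, μ = (μ₁ᵀ, μ₂ᵀ)ᵀ, β = (β₁ᵀ, β₂ᵀ)ᵀ. Then the linear form decomposes as (x − μ)ᵀ Σ⁻¹ β = (x₁ − μ₁)ᵀ Σ₁₁⁻¹ β₁ + (x₂ − μ_{2|1})ᵀ Σ_{2|1}⁻¹ β_{2|1}, where μ_{2|1} := μ₂ + Σ₁₂ᵀ Σ₁₁⁻¹ (x₁ − μ₁), Σ_{2|1} := Σ₂₂ − Σ₁₂ᵀ Σ₁₁⁻¹ Σ₁₂, and β_{2|1} := β₂ − Σ₁₂ᵀ Σ₁₁⁻¹ β₁. -/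

import Mathlib

open Matrix

private lemma tkey {m n : Type*} [Fintype m] [Fintype n]
    (M : Matrix m n ℝ) (a : m → ℝ) (c : n → ℝ) :
    (Mᵀ *ᵥ a) ⬝ᵥ c = a ⬝ᵥ (M *ᵥ c) := by
  rw [mulVec_transpose, ← dotProduct_mulVec]

/-- Decomposition of the linear form for a partitioned positive definite matrix:
`(x − μ)ᵀ Σ⁻¹ β = (x₁ − μ₁)ᵀ Σ₁₁⁻¹ β₁ + (x₂ − μ_{2|1})ᵀ Σ_{2|1}⁻¹ β_{2|1}`, where
`μ_{2|1} = μ₂ + Σ₁₂ᵀ Σ₁₁⁻¹ (x₁ − μ₁)`, `Σ_{2|1} = Σ₂₂ − Σ₁₂ᵀ Σ₁₁⁻¹ Σ₁₂` and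
`β_{2|1} = β₂ − Σ₁₂ᵀ Σ₁₁⁻¹ β₁`. -/
theorem linear_form_block_decomposition {d₁ d₂ : ℕ}
    (S : Matrix (Fin d₁ ⊕ Fin d₂) (Fin d₁ ⊕ Fin d₂) ℝ) (hS : S.PosDef)
    (x μ β : Fin d₁ ⊕ Fin d₂ → ℝ) :
    (x - μ) ⬝ᵥ (S⁻¹ *ᵥ β) =
      (x ∘ Sum.inl - μ ∘ Sum.inl) ⬝ᵥ
        ((S.submatrix Sum.inl Sum.inl)⁻¹ *ᵥ (β ∘ Sum.inl)) +
      (x ∘ Sum.inr -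
          ((μ ∘ Sum.inr) +
            ((S.submatrix Sum.inl Sum.inr)ᵀ * (S.submatrix Sum.inl Sum.inl)⁻¹) *ᵥ
              (x ∘ Sum.inl - μ ∘ Sum.inl))) ⬝ᵥ
        ((S.submatrix Sum.inr Sum.inr -
            (S.submatrix Sum.inl Sum.inr)ᵀ * (S.submatrix Sum.inl Sum.inl)⁻¹ *
              S.submatrix Sum.inl Sum.inr)⁻¹ *ᵥ
          (β ∘ Sum.inr -
            ((S.submatrix Sum.inl Sum.inr)ᵀ * (S.submatrix Sum.inl Sum.inl)⁻¹) *ᵥ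
              (β ∘ Sum.inl))) := by
  set A := S.submatrix Sum.inl Sum.inl with hA'
  set B := S.submatrix Sum.inl Sum.inr with hB'
  set D := S.submatrix Sum.inr Sum.inr with hD'
  have hsym : ∀ i j, S i j = S j i := fun i j => by
    simpa using hS.1.apply j i
  have hSb : S = fromBlocks A B Bᵀ D := by
    ext (i|i) (j|j) <;> simp [fromBlocks, hA', hB', hD'] <;> exact hsym _ _
  have hA : A.PosDef := by
    refine posDef_iff_dotProduct_mulVec.mpr ⟨?_, ?_⟩
    · ext i j; simpa [hA'] using hsym (Sum.inl j) (Sum.inl i)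
    · intro v hv
      have hv' : (Sum.elim v 0 : Fin d₁ ⊕ Fin d₂ → ℝ) ≠ 0 := by
        intro h
        apply hv
        ext i
        simpa using congrFun h (Sum.inl i)
      have := hS.dotProduct_mulVec_pos hv'
      rw [hSb] at this
      simpa [fromBlocks_mulVec, sumElim_dotProduct_sumElim] using this
  haveI iA : Invertible A := hA.isUnit.invertible
  haveI iS : Invertible (fromBlocks A B Bᵀ D) := hSb ▸ hS.isUnit.invertible
  haveI iE' : Invertible (D - Bᵀ * ⅟A * B) :=
    invertibleOfFromBlocks₁₁Invertible A B Bᵀ D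
  have hinvA : ⅟A = A⁻¹ := invOf_eq_nonsing_inv A
  haveI iE : Invertible (D - Bᵀ * A⁻¹ * B) := by rwa [hinvA] at iE'
  have hAT : Aᵀ = A := by
    have := hA.1; simpa [Matrix.IsSymm] using this
  have hAinvT : (A⁻¹)ᵀ = A⁻¹ := by rw [transpose_nonsing_inv, hAT]
  set E := D - Bᵀ * A⁻¹ * B with hE'
  have hEinv : ⅟(D - Bᵀ * ⅟A * B) = E⁻¹ := by
    rw [invOf_eq_nonsing_inv, hinvA]
  have hSinv : S⁻¹ = fromBlocks (A⁻¹ + A⁻¹ * B * E⁻¹ * Bᵀ * A⁻¹) (-(A⁻¹ * B * E⁻¹))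
      (-(E⁻¹ * Bᵀ * A⁻¹)) E⁻¹ := by
    rw [hSb, ← invOf_eq_nonsing_inv, invOf_fromBlocks₁₁_eq, hEinv, hinvA]
  have key : ∀ (u : Fin d₁ → ℝ) (w : Fin d₂ → ℝ),
      (Bᵀ *ᵥ (A⁻¹ *ᵥ u)) ⬝ᵥ w = u ⬝ᵥ (A⁻¹ *ᵥ (B *ᵥ w)) := by
    intro u w
    rw [tkey B, ← hAinvT, tkey A⁻¹, hAinvT]
  have hx : x - μ = Sum.elim (x ∘ Sum.inl - μ ∘ Sum.inl) (x ∘ Sum.inr - μ ∘ Sum.inr) := by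
    ext (i|i) <;> rfl
  have hβ : β = Sum.elim (β ∘ Sum.inl) (β ∘ Sum.inr) := by
    ext (i|i) <;> rfl
  rw [hSinv, hx, hβ]
  set u := x ∘ Sum.inl - μ ∘ Sum.inl
  set v := x ∘ Sum.inr - μ ∘ Sum.inr with hvdef
  set b1 := β ∘ Sum.inl
  set b2 := β ∘ Sum.inr
  have hv' : x ∘ Sum.inr - ((μ ∘ Sum.inr) + (Bᵀ * A⁻¹) *ᵥ u) = v - Bᵀ *ᵥ (A⁻¹ *ᵥ u) := by
    rw [mulVec_mulVec, hvdef]; abel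
  rw [hv']
  simp only [fromBlocks_mulVec, sumElim_dotProduct_sumElim, add_mulVec, neg_mulVec,
    dotProduct_add, dotProduct_neg, dotProduct_sub, sub_dotProduct, mulVec_sub,
    Sum.elim_comp_inl, Sum.elim_comp_inr, ← mulVec_mulVec]
  rw [key u (E⁻¹ *ᵥ b2), key u (E⁻¹ *ᵥ (Bᵀ *ᵥ (A⁻¹ *ᵥ b1)))]
  ring
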